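/- Let G be a finite simple graph with m ≥ 1 edges, let T ≥ 1, let ω > 0, and let 𝒢 be the temporal graph with lifetime T whose every snapshot equals G. Then a partition 𝒜 of 𝒢 (given by π: V × {1,…,T} → {1,…,k}) satisfies q_ω(𝒢,𝒜) = q*_ω(𝒢) if and only if π(v,t) = π(v,1) for every vertex v and every time t (so every vertex is loyal at every time) and the induced static partition 𝒜_1 satisfies q(G,𝒜_1) = q*(G). In other words, the optimal partitions of 𝒢 are exactly those obtained by repeating an optimal static partition of G at every timestep. -/

import Mathlib

open Finset
open scoped Classical

namespace TemporalModularity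

noncomputable section

variable {V : Type*} [Fintype V] {P : Type*}

/-- Twice the number of edges of `G` with both endpoints in `A`
(the sum over ordered pairs of vertices of `A` of the adjacency indicator). -/
def twoE (G : SimpleGraph V) (A : Finset V) : ℝ :=
  ∑ u ∈ A, ∑ v ∈ A, if G.Adj u v then (1 : ℝ) else 0

/-- The degree of `v` in `G`, as a real number. -/
def deg (G : SimpleGraph V) (v : V) : ℝ :=
  ∑ u : V, if G.Adj v u then (1 : ℝ) else 0

/-- The number of edges of `G` (half the sum of the degrees), as a real number. -/
def numEdges (G : SimpleGraph V) : ℝ := (∑ v : V, deg G v) / 2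

/-- The volume of `A` in `G`: the sum of the degrees of the vertices of `A`. -/
def vol (G : SimpleGraph V) (A : Finset V) : ℝ := ∑ v ∈ A, deg G v

/-- The part with label `p` of the vertex partition induced by the labelling `π`. -/
def part (π : V → P) (p : P) : Finset V := univ.filter fun v => π v = p

/-- `Σ_{A ∈ 𝒜} (2 e_G(A) − vol_G(A)² / (2m))`, where `𝒜` is the partition of the
vertices induced by the labelling `π` (empty parts contribute zero). -/
def snapTerm (G : SimpleGraph V) (π : V → P) : ℝ :=
  ∑ p ∈ univ.image π,
    (twoE G (part π p) - vol G (part π p) ^ 2 / (2 * numEdges G))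

/-- The static modularity `q(G,𝒜) = Σ_{A ∈ 𝒜} (e(A)/m − vol(A)²/(4m²))` of the
partition induced by the labelling `π`. -/
def staticQ (G : SimpleGraph V) (π : V → P) : ℝ :=
  ∑ p ∈ univ.image π,
    (twoE G (part π p) / (2 * numEdges G) -
      vol G (part π p) ^ 2 / (4 * numEdges G ^ 2))

/-- The maximum static modularity `q*(G)` over all vertex partitions (every partition
of `V` is induced by some labelling `V → V`). -/
def staticQStar (G : SimpleGraph V) : ℝ := ⨆ π : V → V, staticQ G π

/-- The loyalty contribution `L(𝒜)` of the temporal partition `π` with lifetime `T`. -/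
def loyalty (T : ℕ) (π : V → ℕ → P) : ℝ :=
  ∑ v : V, ∑ t ∈ Icc 1 (T - 1), if π v t = π v (t + 1) then (1 : ℝ) else 0

/-- The per-time loyalty `L(𝒜,t)` of the temporal partition `π`. -/
def loyaltyAt (π : V → ℕ → P) (t : ℕ) : ℝ :=
  ∑ v : V, if π v t = π v (t + 1) then (1 : ℝ) else 0

/-- The normalisation factor `μ_ω(𝒢) = ω n (T−1)/2 + Σ_t m_t`. -/
def mu (G : ℕ → SimpleGraph V) (T : ℕ) (ω : ℝ) : ℝ :=
  ω * (Fintype.card V) * ((T : ℝ) - 1) / 2 + ∑ t ∈ Icc 1 T, numEdges (G t)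

/-- The non-normalised temporal modularity of the restriction of the temporal graph
`G` to the time interval `[a,b]`, for the partition `π`. -/
def qTildeI (G : ℕ → SimpleGraph V) (a b : ℕ) (ω : ℝ) (π : V → ℕ → P) : ℝ :=
  (∑ t ∈ Icc a b, snapTerm (G t) fun v => π v t) +
    ω * ∑ v : V, ∑ t ∈ Icc a (b - 1), if π v t = π v (t + 1) then (1 : ℝ) else 0

/-- The non-normalised temporal modularity `q̃_ω(𝒢,𝒜)` of the partition `π` of the
temporal graph `G` with lifetime `T`. -/
def qTilde (G : ℕ → SimpleGraph V) (T : ℕ) (ω : ℝ) (π : V → ℕ → P) : ℝ :=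
  qTildeI G 1 T ω π

/-- The temporal modularity `q_ω(𝒢,𝒜)` of the partition `π` of the temporal graph `G`
with lifetime `T`. -/
def qTemp (G : ℕ → SimpleGraph V) (T : ℕ) (ω : ℝ) (π : V → ℕ → P) : ℝ :=
  qTilde G T ω π / (2 * mu G T ω)

/-- The temporal modularity `q*_ω(𝒢)`: the maximum of `q_ω(𝒢,𝒜)` over all partitions
(every partition of `V × [T]` is induced by some labelling into `ℕ`). -/
def qTempStar (G : ℕ → SimpleGraph V) (T : ℕ) (ω : ℝ) : ℝ :=
  ⨆ π : V → ℕ → ℕ, qTemp G T ω π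

/-- The temporal `k`-modularity `q*_{k,ω}(𝒢)`: the maximum of `q_ω(𝒢,𝒜)` over all
partitions into at most `k` parts. -/
def qTempStarK (G : ℕ → SimpleGraph V) (T : ℕ) (ω : ℝ) (k : ℕ) : ℝ :=
  ⨆ π : V → ℕ → Fin k, qTemp G T ω π

/-- The maximum non-normalised temporal modularity of the restriction of `G` to the
time interval `[a,b]`, over all partitions. -/
def qTildeStarI (G : ℕ → SimpleGraph V) (a b : ℕ) (ω : ℝ) : ℝ :=
  ⨆ π : V → ℕ → ℕ, qTildeI G a b ω π

/-- The non-normalised temporal modularity `q̃*_ω(𝒢)` of the temporal graph `G` with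
lifetime `T`. -/
def qTildeStar (G : ℕ → SimpleGraph V) (T : ℕ) (ω : ℝ) : ℝ := qTildeStarI G 1 T ω

/-- The maximum non-normalised temporal modularity of the restriction of `G` to `[a,b]`
over partitions into at most `c` parts. -/
def qTildeStarKI (G : ℕ → SimpleGraph V) (a b : ℕ) (ω : ℝ) (c : ℕ) : ℝ :=
  ⨆ π : V → ℕ → Fin c, qTildeI G a b ω π

/-- The non-normalised temporal `c`-modularity `q̃*_{c,ω}(𝒢)`. -/
def qTildeStarK (G : ℕ → SimpleGraph V) (T : ℕ) (ω : ℝ) (c : ℕ) : ℝ :=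
  qTildeStarKI G 1 T ω c

end

/-!
When every snapshot is `G`, the non-normalised modularity `q̃` is a sum of `T` snapshot terms,
each equal to `2m · q(G, 𝒜_t) ≤ 2m · q*(G)`, plus `ω` times the loyalty, which is at most
`n (T - 1)`. Repeating an optimal static partition at every time attains both bounds at once,
so a partition is optimal exactly when it attains each of them: it is fully loyal (hence
constant in time) and its partition at time `1` is optimal for `G`.
-/

section

variable {V : Type*} [Fintype V] {P Q : Type*}

lemma deg_nonneg (G : SimpleGraph V) (v : V) : 0 ≤ deg G v :=
  sum_nonneg fun _ _ => ite_nonneg zero_le_one le_rfl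

lemma numEdges_nonneg (G : SimpleGraph V) : 0 ≤ numEdges G :=
  div_nonneg (sum_nonneg fun v _ => deg_nonneg G v) zero_le_two

lemma numEdges_pos (G : SimpleGraph V) (hG : G.edgeSet.Nonempty) : 0 < numEdges G := by
  obtain ⟨⟨u, v⟩, huv⟩ := hG
  have hdeg : 0 < deg G u := sum_pos' (fun _ _ => ite_nonneg zero_le_one le_rfl)
    ⟨v, mem_univ v, by simp only [if_pos (show G.Adj u v from huv), one_pos]⟩
  exact div_pos (sum_pos' (fun w _ => deg_nonneg G w) ⟨u, mem_univ u, hdeg⟩) zero_lt_two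

lemma part_comp (σ : V → Q) {g : Q → P} (hg : Set.InjOn g (Set.range σ)) (v : V) :
    part (g ∘ σ) (g (σ v)) = part σ (σ v) := by
  ext w
  simp [part, hg.eq_iff (Set.mem_range_self w) (Set.mem_range_self v)]

lemma staticQ_comp (G : SimpleGraph V) (σ : V → Q) {g : Q → P}
    (hg : Set.InjOn g (Set.range σ)) : staticQ G (g ∘ σ) = staticQ G σ := by
  have hinj : Set.InjOn g (univ.image σ) := by simpa using hg
  rw [staticQ, ← image_image, sum_image hinj, staticQ]
  refine sum_congr rfl fun q hq => ?_
  obtain ⟨v, -, rfl⟩ := mem_image.mp hq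
  rw [part_comp σ hg]

lemma staticQ_le_staticQStar [Nonempty V] (G : SimpleGraph V) (π : V → P) :
    staticQ G π ≤ staticQStar G := by
  -- Relabel each part by one of its vertices, landing among the labellings `V → V`.
  set σ : V → V := fun v => Function.invFun π (π v)
  have hπσ (v : V) : π (σ v) = π v := Function.invFun_eq ⟨v, rfl⟩
  have hinj : Set.InjOn π (Set.range σ) := by
    rintro _ ⟨a, rfl⟩ _ ⟨b, rfl⟩ h
    rw [hπσ, hπσ] at h
    simp only [σ, h]
  calc staticQ G π = staticQ G σ := by rw [← staticQ_comp G σ hinj, (funext hπσ : π ∘ σ = π)]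
    _ ≤ staticQStar G := le_ciSup (Set.finite_range _).bddAbove σ

lemma exists_staticQ_eq_staticQStar (G : SimpleGraph V) :
    ∃ σ : V → ℕ, staticQ G σ = staticQStar G := by
  have : Nonempty (V → V) := ⟨id⟩
  obtain ⟨σ, hσ⟩ : ∃ σ : V → V, staticQ G σ = staticQStar G := exists_eq_ciSup_of_finite
  have hinj : Function.Injective fun v => (Fintype.equivFin V v : ℕ) :=
    Fin.val_injective.comp (Fintype.equivFin V).injective
  exact ⟨_ ∘ σ, (staticQ_comp G σ hinj.injOn).trans hσ⟩

lemma snapTerm_eq_mul_staticQ (G : SimpleGraph V) (hm : numEdges G ≠ 0) (π : V → P) :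
    snapTerm G π = 2 * numEdges G * staticQ G π := by
  rw [snapTerm, staticQ, mul_sum]
  refine sum_congr rfl fun p _ => ?_
  field_simp
  ring

lemma loyalty_le (T : ℕ) (π : V → ℕ → P) :
    loyalty T π ≤ Fintype.card V * (T - 1 : ℕ) := by
  calc loyalty T π ≤ ∑ _v : V, ∑ _t ∈ Icc 1 (T - 1), (1 : ℝ) :=
        sum_le_sum fun _ _ => sum_le_sum fun _ _ => ite_le_one le_rfl zero_le_one
    _ = Fintype.card V * (T - 1 : ℕ) := by simp

lemma loyalty_eq_iff (T : ℕ) (π : V → ℕ → P) :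
    loyalty T π = Fintype.card V * (T - 1 : ℕ) ↔
      ∀ v, ∀ t ∈ Icc 1 (T - 1), π v t = π v (t + 1) := by
  have hmax : (Fintype.card V * (T - 1 : ℕ) : ℝ) = ∑ _v : V, ∑ _t ∈ Icc 1 (T - 1), (1 : ℝ) := by
    simp
  have hle : ∀ v : V, ∀ t, (if π v t = π v (t + 1) then (1 : ℝ) else 0) ≤ 1 :=
    fun _ _ => ite_le_one le_rfl zero_le_one
  rw [hmax, loyalty, sum_eq_sum_iff_of_le fun v _ => sum_le_sum fun t _ => hle v t]
  simp only [mem_univ, true_imp_iff, sum_eq_sum_iff_of_le fun t _ => hle _ t]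
  simp

lemma forall_eq_succ_iff_forall_eq_one {f : ℕ → P} {T : ℕ} :
    (∀ t ∈ Icc 1 (T - 1), f t = f (t + 1)) ↔ ∀ t ∈ Icc 1 T, f t = f 1 := by
  simp only [mem_Icc]
  constructor
  · rintro h t ⟨h1, hT⟩
    induction t, h1 using Nat.le_induction with
    | base => rfl
    | succ t h1 ih => rw [← h t ⟨h1, by omega⟩, ih (by omega)]
  · rintro h t ⟨h1, hT⟩
    rw [h t ⟨h1, by omega⟩, h (t + 1) ⟨by omega, by omega⟩]

lemma mu_pos {G : ℕ → SimpleGraph V} {T : ℕ} {ω : ℝ} (hω : 0 ≤ ω)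
    (hG : ∃ t ∈ Icc 1 T, 0 < numEdges (G t)) : 0 < mu G T ω := by
  obtain ⟨t, ht, hpos⟩ := hG
  have hT : (1 : ℝ) ≤ T := by exact_mod_cast (mem_Icc.mp ht).1.trans (mem_Icc.mp ht).2
  have hloyaltyPart : 0 ≤ ω * Fintype.card V * ((T : ℝ) - 1) / 2 := by
    have : 0 ≤ (T : ℝ) - 1 := by linarith
    positivity
  have hedges : 0 < ∑ t ∈ Icc 1 T, numEdges (G t) :=
    sum_pos' (fun _ _ => numEdges_nonneg _) ⟨t, ht, hpos⟩
  rw [mu]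
  linarith

lemma qTilde_eq_add_loyalty (G : ℕ → SimpleGraph V) (T : ℕ) (ω : ℝ) (π : V → ℕ → P) :
    qTilde G T ω π = ∑ t ∈ Icc 1 T, snapTerm (G t) (fun v => π v t) + ω * loyalty T π :=
  rfl

noncomputable def qTildeConstBound (G : SimpleGraph V) (T : ℕ) (ω : ℝ) : ℝ :=
  T * (2 * numEdges G * staticQStar G) + ω * (Fintype.card V * (T - 1 : ℕ))

section ConstantSnapshots

variable [Nonempty V] (G : SimpleGraph V) (hm : 0 < numEdges G) (T : ℕ) (π : V → ℕ → P)
include hm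

lemma snapTerm_le_mul_staticQStar (σ : V → P) :
    snapTerm G σ ≤ 2 * numEdges G * staticQStar G := by
  rw [snapTerm_eq_mul_staticQ G hm.ne']
  exact mul_le_mul_of_nonneg_left (staticQ_le_staticQStar G σ) (by positivity)

lemma sum_snapTerm_le :
    ∑ t ∈ Icc 1 T, snapTerm G (fun v => π v t) ≤ T * (2 * numEdges G * staticQStar G) := by
  simpa using sum_le_sum fun t (_ : t ∈ Icc 1 T) => snapTerm_le_mul_staticQStar G hm fun v => π v t

lemma sum_snapTerm_eq_iff :
    ∑ t ∈ Icc 1 T, snapTerm G (fun v => π v t) = T * (2 * numEdges G * staticQStar G) ↔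
      ∀ t ∈ Icc 1 T, staticQ G (fun v => π v t) = staticQStar G := by
  rw [show (T : ℝ) * (2 * numEdges G * staticQStar G) =
      ∑ _t ∈ Icc 1 T, 2 * numEdges G * staticQStar G by simp,
    sum_eq_sum_iff_of_le fun t _ => snapTerm_le_mul_staticQStar G hm _]
  refine forall₂_congr fun t _ => ?_
  rw [snapTerm_eq_mul_staticQ G hm.ne', mul_right_inj' (by positivity)]

lemma qTilde_const_le {ω : ℝ} (hω : 0 ≤ ω) :
    qTilde (fun _ => G) T ω π ≤ qTildeConstBound G T ω :=
  add_le_add (sum_snapTerm_le G hm T π) (mul_le_mul_of_nonneg_left (loyalty_le T π) hω)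

lemma qTilde_const_eq_iff (hT : 1 ≤ T) {ω : ℝ} (hω : 0 < ω) :
    qTilde (fun _ => G) T ω π = qTildeConstBound G T ω ↔
      (∀ v, ∀ t ∈ Icc 1 T, π v t = π v 1) ∧ staticQ G (fun v => π v 1) = staticQStar G := by
  rw [qTilde_eq_add_loyalty, qTildeConstBound, add_eq_add_iff_eq_and_eq (sum_snapTerm_le G hm T π)
    (mul_le_mul_of_nonneg_left (loyalty_le T π) hω.le), mul_right_inj' hω.ne',
    sum_snapTerm_eq_iff G hm, loyalty_eq_iff,
    forall_congr' fun v => forall_eq_succ_iff_forall_eq_one]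
  constructor
  · rintro ⟨hopt, hloyal⟩
    exact ⟨hloyal, hopt 1 (left_mem_Icc.mpr hT)⟩
  · rintro ⟨hloyal, hopt⟩
    refine ⟨fun t ht => ?_, hloyal⟩
    rwa [show (fun v => π v t) = fun v => π v 1 from funext fun v => hloyal v t ht]

end ConstantSnapshots

end

/-- If every snapshot of `𝒢` equals the static graph `G` (which has at
least one edge), `T ≥ 1` and `ω > 0`, then a partition `π` of `𝒢` is optimal if and
only if `π(v,t) = π(v,1)` for every vertex `v` and every time `t ∈ [T]` (every vertex
is loyal at every time) and the induced static partition at time `1` is an optimal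
static partition of `G`. -/
theorem temporalModularity_constant_snapshots_optimal_iff {V : Type*} [Fintype V]
    (G : SimpleGraph V) (hG : G.edgeSet.Nonempty)
    (T : ℕ) (hT : 1 ≤ T) (ω : ℝ) (hω : 0 < ω) (π : V → ℕ → ℕ) :
    qTemp (fun _ => G) T ω π = qTempStar (fun _ => G) T ω ↔
      ((∀ v : V, ∀ t ∈ Icc 1 T, π v t = π v 1) ∧
        staticQ G (fun v => π v 1) = staticQStar G) := by
  have : Nonempty V := by
    obtain ⟨⟨u, -⟩, -⟩ := hG
    exact ⟨u⟩
  have hm := numEdges_pos G hG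
  have hμ : 0 < 2 * mu (fun _ => G) T ω :=
    mul_pos zero_lt_two (mu_pos hω.le ⟨1, left_mem_Icc.mpr hT, hm⟩)
  obtain ⟨σ, hσ⟩ := exists_staticQ_eq_staticQStar G
  have hmax : IsGreatest (Set.range (qTemp (P := ℕ) (fun _ => G) T ω))
      (qTildeConstBound G T ω / (2 * mu (fun _ => G) T ω)) := by
    refine ⟨⟨fun v _ => σ v, ?_⟩, ?_⟩
    · rw [qTemp, (qTilde_const_eq_iff G hm T (fun v _ => σ v) hT hω).mpr ⟨fun _ _ _ => rfl, hσ⟩]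
    · rintro _ ⟨π', rfl⟩
      exact div_le_div_of_nonneg_right (qTilde_const_le G hm T π' hω.le) hμ.le
  rw [qTempStar, ← sSup_range, hmax.csSup_eq, qTemp, div_left_inj' hμ.ne',
    qTilde_const_eq_iff G hm T π hT hω]

end TemporalModularity
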